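/- arXiv:2204.07873 — 9 statements merged into one kernel-verified Lean document; each statement's English description precedes it below -/
import Mathlib

section
/- For every partition λ = (λ₁ ≥ λ₂ ≥ ... ≥ λᵣ) of a positive integer n with λ₁ ≥ r (nonnegative rank), there exists a function f : {1,...,n} → {1,...,n} such that f ∘ f is constant and the multiset of nonzero fiber sizes of f equals the multiset {λ₁,...,λᵣ}. -/
def blk : List ℕ → ℕ → ℕ
  | [], _ => 0
  | a :: l, x => if x < a then 0 else blk l (x - a) + 1

lemma blk_lt : ∀ (L : List ℕ) (x : ℕ), x < L.sum → blk L x < L.length := by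
  intro L
  induction L with
  | nil => simp
  | cons a l ih =>
    intro x hx
    simp only [blk, List.length_cons]
    split_ifs with hxa
    · omega
    · have : x - a < l.sum := by simp [List.sum_cons] at hx; omega
      have := ih (x - a) this
      omega

lemma blk_fiber : ∀ (L : List ℕ) (j : ℕ), j < L.length →
    ((Finset.range L.sum).filter (fun x => blk L x = j)).card = L.getD j 0 := by
  intro L
  induction L with
  | nil => simp
  | cons a l ih =>
    intro j hj
    rw [List.sum_cons, Finset.range_add, Finset.filter_union, Finset.card_union_of_disjoint]
    · cases j with
      | zero =>
        have h1 : (Finset.range a).filter (fun x => blk (a :: l) x = 0) = Finset.range a := by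
          apply Finset.filter_true_of_mem
          intro x hx
          simp only [Finset.mem_range] at hx
          simp [blk, hx]
        have h2 : ((Finset.range l.sum).map (addLeftEmbedding a)).filter
            (fun x => blk (a :: l) x = 0) = ∅ := by
          apply Finset.filter_false_of_mem
          intro x hx
          simp only [Finset.mem_map, Finset.mem_range, addLeftEmbedding_apply] at hx
          obtain ⟨y, hy, rfl⟩ := hx
          simp [blk]
        simp [h1, h2]
      | succ j =>
        have h1 : (Finset.range a).filter (fun x => blk (a :: l) x = j + 1) = ∅ := by
          apply Finset.filter_false_of_mem
          intro x hx
          simp only [Finset.mem_range] at hx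
          simp [blk, hx]
        rw [h1, Finset.filter_map, Finset.card_map]
        have h3 : Finset.filter ((fun x => blk (a :: l) x = j + 1) ∘ ⇑(addLeftEmbedding a))
            (Finset.range l.sum) = Finset.filter (fun x => blk l x = j) (Finset.range l.sum) :=
          Finset.filter_congr (fun x _ => by simp [blk, addLeftEmbedding_apply])
        rw [h3]
        simp only [Finset.card_empty, zero_add]
        rw [ih j (by simpa using hj)]
        simp
    · apply Finset.disjoint_left.2
      intro x hx hx2
      simp only [Finset.mem_map, Finset.mem_range, addLeftEmbedding_apply, Finset.mem_filter] at hx hx2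
      obtain ⟨_, y, hy, rfl⟩ := hx2
      omega

lemma map_range_getD : ∀ (L : List ℕ), (List.range L.length).map (fun j => L.getD j 0) = L := by
  intro L
  induction L with
  | nil => simp
  | cons a l ih =>
    rw [List.length_cons, List.range_succ_eq_map, List.map_cons, List.map_map]
    simp only [List.getD_cons_zero]
    rw [show ((fun j => (a :: l).getD j 0) ∘ Nat.succ) = (fun j => l.getD j 0) from funext fun j => by simp]
    rw [ih]

lemma blk_of_lt_head {a : ℕ} {l : List ℕ} {x : ℕ} (h : x < a) : blk (a :: l) x = 0 := by
  simp [blk, h]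

lemma main_aux (n : ℕ) (hn : 0 < n) (L : List ℕ) (hsum : L.sum = n)
    (hpos : ∀ x ∈ L, 0 < x) (hlen : L.length ≤ L.headI) :
    ∃ f : Fin n → Fin n, (∃ c, ∀ x, f (f x) = c) ∧
      (Finset.univ.image f).val.map
        (fun x => (Finset.univ.filter (fun y => f y = x)).card) = ↑L := by
  classical
  obtain ⟨a, l, rfl⟩ : ∃ a l, L = a :: l := by
    cases L with
    | nil => simp at hsum; omega
    | cons a l => exact ⟨a, l, rfl⟩
  set L := a :: l with hLdef
  have ha : L.length ≤ a := hlen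
  have ha_n : a ≤ n := by
    have : a ≤ L.sum := by simp [hLdef, List.sum_cons]
    omega
  have hblt : ∀ x : Fin n, blk L x.val < n := fun x =>
    lt_of_lt_of_le (blk_lt L x.val (by rw [hsum]; exact x.2)) (le_trans ha ha_n)
  set f : Fin n → Fin n := fun x => ⟨blk L x.val, hblt x⟩ with hf
  have key : ∀ c : Fin n, (Finset.univ.filter (fun y => f y = c)).card
      = ((Finset.range n).filter (fun x => blk L x = c.val)).card := by
    intro c
    apply Finset.card_bij (fun y _ => y.val)
    · intro y hy
      simp only [Finset.mem_filter, Finset.mem_univ, true_and, hf] at hy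
      simp only [Finset.mem_filter, Finset.mem_range]
      exact ⟨y.2, by rw [← hy]⟩
    · intro y _ z _ hyz
      exact Fin.ext hyz
    · intro x hx
      simp only [Finset.mem_filter, Finset.mem_range] at hx
      exact ⟨⟨x, hx.1⟩, by simp [hf, Finset.mem_filter, Fin.ext_iff, hx.2], rfl⟩
  have fib : ∀ (j : ℕ) (hj : j < L.length),
      (Finset.univ.filter (fun y => f y = ⟨j, lt_of_lt_of_le (lt_of_lt_of_le hj ha) ha_n⟩)).card
        = L.getD j 0 := by
    intro j hj
    rw [key]
    have := blk_fiber L j hj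
    rw [hsum] at this
    exact this
  have hlen_n : ∀ m ∈ Finset.range L.length, m < n := fun m hm =>
    lt_of_lt_of_le (lt_of_lt_of_le (Finset.mem_range.1 hm) ha) ha_n
  have himg : Finset.univ.image f = Finset.attachFin (Finset.range L.length) hlen_n := by
    ext c
    simp only [Finset.mem_image, Finset.mem_attachFin, Finset.mem_range]
    constructor
    · rintro ⟨x, -, rfl⟩
      exact blk_lt L x.val (by rw [hsum]; exact x.2)
    · intro hc
      have hcard : 0 < (Finset.univ.filter (fun y => f y = c)).card := by
        have : c = ⟨c.val, lt_of_lt_of_le (lt_of_lt_of_le hc ha) ha_n⟩ := Fin.ext rfl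
        rw [this, fib c.val hc]
        have : L.getD c.val 0 ∈ L := by
          rw [List.getD_eq_getElem L 0 hc]
          exact List.getElem_mem _
        exact hpos _ this
      obtain ⟨y, hy⟩ := Finset.card_pos.1 hcard
      simp only [Finset.mem_filter, Finset.mem_univ, true_and] at hy
      exact ⟨y, Finset.mem_univ y, hy⟩
  refine ⟨f, ⟨⟨0, hn⟩, ?_⟩, ?_⟩
  · intro x
    have h1 : blk L x.val < a := lt_of_lt_of_le (blk_lt L x.val (by rw [hsum]; exact x.2)) ha
    exact Fin.ext (blk_of_lt_head h1)
  · rw [himg]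
    have hval : ((Finset.range L.length).attachFin hlen_n).val
        = (Finset.range L.length).val.pmap (fun m hm => (⟨m, hm⟩ : Fin n)) hlen_n := rfl
    rw [hval, Multiset.map_pmap]
    have hcong : Multiset.pmap
        (fun j (hj : j < n) => (Finset.univ.filter (fun y => f y = ⟨j, hj⟩)).card)
        (Finset.range L.length).val hlen_n
        = Multiset.pmap (fun j (_ : j < n) => L.getD j 0) (Finset.range L.length).val hlen_n := by
      apply Multiset.pmap_congr
      intro j hj h1 h2
      have hjL : j < L.length := by simpa using hj
      exact fib j hjL
    rw [hcong, Multiset.pmap_eq_map]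
    have hrange : (Finset.range L.length).val = ↑(List.range L.length) := rfl
    rw [hrange, Multiset.map_coe, map_range_getD]

lemma sorted_ge_le_headI (L : List ℕ) (hs : L.Pairwise (· ≥ ·)) : ∀ b ∈ L, b ≤ L.headI := by
  cases L with
  | nil => simp
  | cons a l =>
    intro b hb
    rcases List.mem_cons.1 hb with rfl | hb
    · simp
    · exact (List.pairwise_cons.1 hs).1 b hb

/-- For every partition of `n > 0` with nonnegative rank there is `f : Fin n → Fin n`
with `f ∘ f` constant whose multiset of nonzero fiber sizes is the partition. -/
theorem stmt_1 (n : ℕ) (hn : 0 < n) (P : n.Partition)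
    (h : P.parts.card ≤ P.parts.sup) :
    ∃ f : Fin n → Fin n, (∃ c, ∀ x, f (f x) = c) ∧
      (Finset.univ.image f).val.map
        (fun x => (Finset.univ.filter (fun y => f y = x)).card) = P.parts := by
  classical
  have hcoe : ↑(P.parts.sort (· ≥ ·)) = P.parts := P.parts.sort_eq _
  have hsum : (P.parts.sort (· ≥ ·)).sum = n := by
    have := P.parts_sum
    rw [← hcoe, Multiset.sum_coe] at this
    exact this
  have hpos : ∀ x ∈ P.parts.sort (· ≥ ·), 0 < x := by
    intro x hx
    exact P.parts_pos (by rw [← hcoe]; exact_mod_cast hx)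
  have hlen : (P.parts.sort (· ≥ ·)).length ≤ (P.parts.sort (· ≥ ·)).headI := by
    have hcard : P.parts.card = (P.parts.sort (· ≥ ·)).length := by
      rw [← hcoe]; simp
    have hsup : P.parts.sup ≤ (P.parts.sort (· ≥ ·)).headI := by
      apply Multiset.sup_le.2
      intro b hb
      rw [← hcoe] at hb
      exact sorted_ge_le_headI _ (P.parts.pairwise_sort _) b (by exact_mod_cast hb)
    omega
  obtain ⟨f, hc, hm⟩ := main_aux n hn _ hsum hpos hlen
  exact ⟨f, hc, by rw [hm, hcoe]⟩
end

section
/- Let n ≥ 5 and let λ = (λ₁,...,λᵣ) be a partition of n with rank(λ) > 0 (i.e., λ₁ > r). Then there exists a partition λ' of n with 0 ≤ rank(λ') < rank(λ) and Σᵢ (λ'ᵢ)² < Σᵢ λᵢ². -/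
/-!
Splitting a part `a ≥ 2` into `a - 1` and `1`, or moving a unit from a part `a` to a part
`b ≤ a - 2`, lowers the sum of squares. Let `s` be the largest part and `r` the number of parts.
If `s` is repeated or `s ≥ r + 2`, splitting `s` adds a part and lowers the largest part by at
most one, so the rank drops but stays nonnegative. Otherwise `s = r + 1` is the unique largest
part: if some other part is at most `r - 1`, moving a unit from `s` to it gives rank `0`; if all
other parts equal `r`, splitting one of them gives rank `0` too. Such another part exists unless
the partition is `(2)`.
-/

open Multiset

lemma Multiset.exists_eq_cons_of_forall_le {α : Type*} [LinearOrder α] {M : Multiset α}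
    (hM : M ≠ 0) : ∃ s E, M = s ::ₘ E ∧ ∀ x ∈ E, x ≤ s := by
  obtain ⟨s, hs, hmax⟩ := M.toFinset.exists_max_image id (toFinset_nonempty.2 hM)
  exact ⟨s, M.erase s, (cons_erase (mem_toFinset.1 hs)).symm,
    fun x hx => hmax x (mem_toFinset.2 (mem_of_mem_erase hx))⟩

namespace Nat.Partition

variable {n : ℕ} (P : n.Partition)

def rank : ℤ := (P.parts.sup : ℤ) - P.parts.card

def sumSq : ℕ := (P.parts.map (· ^ 2)).sum

variable {P}

lemma sup_eq_of_parts_eq_cons {s : ℕ} {E : Multiset ℕ} (hP : P.parts = s ::ₘ E)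
    (hE : ∀ x ∈ E, x ≤ s) : P.parts.sup = s := by
  rw [hP, sup_cons, sup_eq_left]
  exact Multiset.sup_le.2 hE

lemma rank_eq_of_parts_eq_cons {s : ℕ} {E : Multiset ℕ} (hP : P.parts = s ::ₘ E)
    (hE : ∀ x ∈ E, x ≤ s) : P.rank = s - (E.card + 1 : ℕ) := by
  rw [rank, sup_eq_of_parts_eq_cons hP hE, hP, card_cons]

lemma exists_split_sumSq_lt {a : ℕ} {R : Multiset ℕ} (hP : P.parts = a ::ₘ R) (ha : 2 ≤ a) :
    ∃ Q : n.Partition, Q.parts = (a - 1) ::ₘ 1 ::ₘ R ∧ Q.sumSq < P.sumSq := by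
  have hpos : ∀ x ∈ (a - 1) ::ₘ 1 ::ₘ R, 0 < x := by
    simp only [mem_cons]
    rintro x (rfl | rfl | hx)
    · omega
    · omega
    · exact P.parts_pos (hP ▸ mem_cons_of_mem hx)
  have hsum : ((a - 1) ::ₘ 1 ::ₘ R).sum = n := by
    rw [← P.parts_sum, hP]
    simp only [sum_cons]
    omega
  refine ⟨⟨_, hpos _, hsum⟩, rfl, ?_⟩
  obtain ⟨b, rfl⟩ : ∃ b, a = b + 2 := ⟨a - 2, by omega⟩
  simp only [sumSq, hP, map_cons, sum_cons]
  rw [show b + 2 - 1 = b + 1 by omega]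
  nlinarith

lemma exists_shift_sumSq_lt {a b : ℕ} {R : Multiset ℕ} (hP : P.parts = a ::ₘ b ::ₘ R)
    (hab : b + 2 ≤ a) :
    ∃ Q : n.Partition, Q.parts = (a - 1) ::ₘ (b + 1) ::ₘ R ∧ Q.sumSq < P.sumSq := by
  have hpos : ∀ x ∈ (a - 1) ::ₘ (b + 1) ::ₘ R, 0 < x := by
    simp only [mem_cons]
    rintro x (rfl | rfl | hx)
    · omega
    · omega
    · exact P.parts_pos (hP ▸ mem_cons_of_mem (mem_cons_of_mem hx))
  have hsum : ((a - 1) ::ₘ (b + 1) ::ₘ R).sum = n := by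
    rw [← P.parts_sum, hP]
    simp only [sum_cons]
    omega
  refine ⟨⟨_, hpos _, hsum⟩, rfl, ?_⟩
  obtain ⟨c, rfl⟩ : ∃ c, a = c + b + 2 := ⟨a - b - 2, by omega⟩
  simp only [sumSq, hP, map_cons, sum_cons]
  rw [show c + b + 2 - 1 = c + b + 1 by omega]
  nlinarith

lemma exists_rank_lt_of_max_mem_or_two_le_rank {s : ℕ} {E : Multiset ℕ}
    (hP : P.parts = s ::ₘ E) (hE : ∀ x ∈ E, x ≤ s) (hr : 0 < P.rank)
    (h : s ∈ E ∨ 2 ≤ P.rank) :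
    ∃ Q : n.Partition, 0 ≤ Q.rank ∧ Q.rank < P.rank ∧ Q.sumSq < P.sumSq := by
  have hPr := rank_eq_of_parts_eq_cons hP hE
  obtain ⟨Q, hQ, hQsq⟩ := exists_split_sumSq_lt hP (by omega)
  have hQs : Q.parts.sup ≤ s := by
    refine Multiset.sup_le.2 fun x hx => ?_
    rw [hQ, mem_cons, mem_cons] at hx
    rcases hx with rfl | rfl | hx
    · omega
    · omega
    · exact hE x hx
  have hQr : E.card + 2 ≤ Q.parts.sup := by
    rcases h with hs | h
    · exact le_trans (by omega) (le_sup (hQ ▸ mem_cons_of_mem (mem_cons_of_mem hs)))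
    · exact le_trans (by omega) (le_sup (hQ ▸ mem_cons_self _ _))
  have hQrank : Q.rank = Q.parts.sup - (E.card + 2 : ℕ) := by
    rw [rank, hQ, card_cons, card_cons]
  exact ⟨Q, by omega, by omega, hQsq⟩

lemma exists_rank_eq_zero_by_shift {s a : ℕ} {F : Multiset ℕ}
    (hP : P.parts = s ::ₘ a ::ₘ F) (hF : ∀ x ∈ F, x < s) (ha : a + 2 ≤ s) (hr : P.rank = 1) :
    ∃ Q : n.Partition, Q.rank = 0 ∧ Q.sumSq < P.sumSq := by
  have hE : ∀ x ∈ a ::ₘ F, x ≤ s := by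
    simp only [mem_cons]
    rintro x (rfl | hx)
    · omega
    · exact (hF x hx).le
  have hPr := rank_eq_of_parts_eq_cons hP hE
  obtain ⟨Q, hQ, hQsq⟩ := exists_shift_sumSq_lt hP ha
  have hQE : ∀ x ∈ (a + 1) ::ₘ F, x ≤ s - 1 := by
    simp only [mem_cons]
    rintro x (rfl | hx)
    · omega
    · have := hF x hx; omega
  refine ⟨Q, ?_, hQsq⟩
  rw [rank_eq_of_parts_eq_cons hQ hQE]
  simp only [card_cons] at hPr ⊢
  omega

lemma exists_rank_eq_zero_by_split {s : ℕ} {F : Multiset ℕ}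
    (hP : P.parts = s ::ₘ (s - 1) ::ₘ F) (hF : ∀ x ∈ F, x ≤ s) (hs : 3 ≤ s)
    (hr : P.rank = 1) :
    ∃ Q : n.Partition, Q.rank = 0 ∧ Q.sumSq < P.sumSq := by
  have hPr := rank_eq_of_parts_eq_cons hP (by simpa [mem_cons] using hF)
  obtain ⟨Q, hQ, hQsq⟩ := exists_split_sumSq_lt (hP.trans (cons_swap _ _ _)) (by omega)
  have hQ' : Q.parts = s ::ₘ (s - 1 - 1) ::ₘ 1 ::ₘ F := by
    rw [hQ, cons_swap 1, cons_swap (s - 1 - 1)]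
  have hQE : ∀ x ∈ (s - 1 - 1) ::ₘ 1 ::ₘ F, x ≤ s := by
    simp only [mem_cons]
    rintro x (rfl | rfl | hx)
    · omega
    · omega
    · exact hF x hx
  refine ⟨Q, ?_, hQsq⟩
  rw [rank_eq_of_parts_eq_cons hQ' hQE]
  simp only [card_cons] at hPr ⊢
  omega

lemma exists_rank_eq_zero_of_rank_eq_one (hn : n ≠ 2) {s : ℕ} {E : Multiset ℕ}
    (hP : P.parts = s ::ₘ E) (hE : ∀ x ∈ E, x < s) (hr : P.rank = 1) :
    ∃ Q : n.Partition, Q.rank = 0 ∧ Q.sumSq < P.sumSq := by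
  have hPr := rank_eq_of_parts_eq_cons hP fun x hx => (hE x hx).le
  by_cases hshift : ∃ a ∈ E, a + 2 ≤ s
  · obtain ⟨a, ha, has⟩ := hshift
    exact exists_rank_eq_zero_by_shift (by rw [hP, cons_erase ha])
      (fun x hx => hE x (mem_of_mem_erase hx)) has hr
  push Not at hshift
  obtain ⟨a, ha⟩ : ∃ a, a ∈ E := by
    refine exists_mem_of_ne_zero fun hE0 => hn ?_
    rw [← P.parts_sum, hP, hE0]
    rw [hE0, card_zero] at hPr
    simp only [sum_cons, sum_zero]
    omega
  have has : a = s - 1 := by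
    have := hE a ha
    have := hshift a ha
    omega
  have hcard : 0 < E.card := card_pos_iff_exists_mem.2 ⟨a, ha⟩
  subst has
  exact exists_rank_eq_zero_by_split (by rw [hP, cons_erase ha])
    (fun x hx => (hE x (mem_of_mem_erase hx)).le) (by omega) hr

theorem exists_rank_lt (hn : n ≠ 2) (hr : 0 < P.rank) :
    ∃ Q : n.Partition, 0 ≤ Q.rank ∧ Q.rank < P.rank ∧ Q.sumSq < P.sumSq := by
  have hne : P.parts ≠ 0 := by
    rintro h0
    simp [rank, h0] at hr
  obtain ⟨s, E, hP, hE⟩ := exists_eq_cons_of_forall_le hne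
  by_cases h : s ∈ E ∨ 2 ≤ P.rank
  · exact exists_rank_lt_of_max_mem_or_two_le_rank hP hE hr h
  push Not at h
  obtain ⟨Q, hQ, hQsq⟩ := exists_rank_eq_zero_of_rank_eq_one hn hP
    (fun x hx => (hE x hx).lt_of_ne fun hxs => h.1 (hxs ▸ hx)) (by omega)
  exact ⟨Q, hQ.ge, hQ ▸ hr, hQsq⟩

end Nat.Partition

/-- For `n ≥ 5` and a partition of `n` with strictly positive rank, there is a partition
of `n` with smaller (but still nonnegative) rank and strictly smaller sum of squares. -/
theorem stmt_2 (n : ℕ) (hn : 5 ≤ n) (P : n.Partition)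
    (h : P.parts.card < P.parts.sup) :
    ∃ Q : n.Partition, Q.parts.card ≤ Q.parts.sup ∧
      Q.parts.sup - Q.parts.card < P.parts.sup - P.parts.card ∧
      (Q.parts.map (fun x => x ^ 2)).sum < (P.parts.map (fun x => x ^ 2)).sum := by
  obtain ⟨Q, hQ, hQP, hQsq⟩ := P.exists_rank_lt (by omega) (by unfold Nat.Partition.rank; omega)
  unfold Nat.Partition.rank at hQ hQP
  exact ⟨Q, by omega, by omega, hQsq⟩
end

section
/- For n ≠ 2, the minimum of the sum of squares of parts over all partitions of n with nonnegative rank is attained at a partition of rank exactly zero (a balanced partition). -/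
lemma multiset_sup_mem (s : Multiset ℕ) (hs : s ≠ 0) : s.sup ∈ s := by
  induction s using Multiset.induction_on with
  | empty => simp at hs
  | cons a t ih =>
    rw [Multiset.sup_cons]
    rcases eq_or_ne t 0 with rfl | ht
    · simp
    · rcases le_total a t.sup with h | h
      · rw [sup_eq_right.mpr h]
        exact Multiset.mem_cons_of_mem (ih ht)
      · rw [sup_eq_left.mpr h]
        exact Multiset.mem_cons_self a t

lemma sq_ineq1 (a : ℕ) (h : 2 ≤ a) : (a - 1) ^ 2 + 1 < a ^ 2 := by
  obtain ⟨b, rfl⟩ : ∃ b, a = b + 1 := ⟨a - 1, by omega⟩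
  simp only [Nat.add_sub_cancel]
  nlinarith [show 1 ≤ b by omega]

lemma sq_ineq2 (a s : ℕ) (h : s + 1 ≤ a - 1) (h3 : 2 ≤ a) :
    (a - 1) ^ 2 + (s + 1) ^ 2 < a ^ 2 + s ^ 2 := by
  obtain ⟨b, rfl⟩ : ∃ b, a = b + 1 := ⟨a - 1, by omega⟩
  simp only [Nat.add_sub_cancel] at h ⊢
  nlinarith [h]

lemma sq_ineq3 (a : ℕ) (h : 3 ≤ a) : (a - 1) * (a - 2) ^ 2 < (a - 2) * (a - 1) ^ 2 := by
  obtain ⟨c, rfl⟩ : ∃ c, a = c + 3 := ⟨a - 3, by omega⟩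
  have h1 : c + 3 - 1 = c + 2 := by omega
  have h2 : c + 3 - 2 = c + 1 := by omega
  rw [h1, h2]
  nlinarith

/-- For `n ≠ 2`, the minimal sum of squares over partitions of `n` with nonnegative rank
is attained at a balanced partition (rank exactly zero). -/
theorem stmt_3 (n : ℕ) (hn : n ≠ 2) :
    ∃ Q : n.Partition, Q.parts.sup = Q.parts.card ∧
      ∀ P : n.Partition, P.parts.card ≤ P.parts.sup →
        (Q.parts.map (fun x => x ^ 2)).sum ≤ (P.parts.map (fun x => x ^ 2)).sum := by
  classical
  set f : n.Partition → ℕ := fun P => (P.parts.map (fun x => x ^ 2)).sum with hf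
  set T : Finset n.Partition :=
    Finset.univ.filter (fun P : n.Partition => P.parts.card ≤ P.parts.sup) with hTdef
  have hT : T.Nonempty := by
    refine ⟨Nat.Partition.indiscrete n, ?_⟩
    simp only [hTdef, Finset.mem_filter, Finset.mem_univ, true_and]
    rcases eq_or_ne n 0 with rfl | h0
    · simp [Nat.Partition.indiscrete, Nat.Partition.ofSums]
    · rw [Nat.Partition.indiscrete_parts h0]
      simpa using Nat.one_le_iff_ne_zero.mpr h0
  obtain ⟨P, hPmem, hPmin⟩ := T.exists_min_image f hT
  have hPT : P.parts.card ≤ P.parts.sup := by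
    simpa [hTdef] using hPmem
  have key : ∀ Q : n.Partition, Q.parts.card ≤ Q.parts.sup → f P ≤ f Q := by
    intro Q hQ
    exact hPmin Q (by simpa [hTdef] using hQ)
  refine ⟨P, ?_, key⟩
  by_contra hne
  have hlt : P.parts.card < P.parts.sup := lt_of_le_of_ne hPT (fun h => hne h.symm)
  have hP0 : P.parts ≠ 0 := by
    intro h
    rw [h] at hlt
    simp at hlt
  obtain ⟨a, ha⟩ : ∃ a, P.parts.sup = a := ⟨_, rfl⟩
  obtain ⟨rest, hrest⟩ := Multiset.exists_cons_of_mem (ha ▸ multiset_sup_mem P.parts hP0)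
  rw [ha] at hPT hlt
  have hr1 : 1 ≤ P.parts.card := by rw [hrest]; simp
  have ha2 : 2 ≤ a := lt_of_le_of_lt hr1 hlt
  have hrestsum : a + rest.sum = n := by
    have := P.parts_sum
    rw [hrest] at this
    simpa using this
  have hrestcard : P.parts.card = rest.card + 1 := by rw [hrest]; simp
  have hrestsup : rest.sup ≤ a := by
    have h1 : P.parts.sup = a ⊔ rest.sup := by rw [hrest, Multiset.sup_cons]
    rw [ha] at h1
    exact le_sup_right.trans h1.ge
  have hrestpos : ∀ x ∈ rest, 0 < x := fun x hx =>
    P.parts_pos (by rw [hrest]; exact Multiset.mem_cons_of_mem hx)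
  have hfP : f P = a ^ 2 + (rest.map (fun x => x ^ 2)).sum := by
    simp only [hf]
    rw [hrest]
    simp
  have contra : ∀ Q : n.Partition, Q.parts.card ≤ Q.parts.sup → f Q < f P → False := by
    intro Q h1 h2
    exact absurd (key Q h1) (not_le.mpr h2)
  by_cases hmove1 : P.parts.card + 1 ≤ (a - 1) ⊔ rest.sup
  · -- Move 1 : replace a by (a-1) and a new part 1
    have hpos : ∀ x ∈ (a - 1) ::ₘ 1 ::ₘ rest, 0 < x := by
      intro x hx
      rcases Multiset.mem_cons.mp hx with rfl | hx
      · omega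
      rcases Multiset.mem_cons.mp hx with rfl | hx
      · norm_num
      · exact hrestpos x hx
    have hsum : ((a - 1) ::ₘ 1 ::ₘ rest).sum = n := by
      simp only [Multiset.sum_cons]
      omega
    refine contra ⟨(a - 1) ::ₘ 1 ::ₘ rest, fun {x} hx => hpos x hx, hsum⟩ ?_ ?_
    · show ((a - 1) ::ₘ 1 ::ₘ rest).card ≤ ((a - 1) ::ₘ 1 ::ₘ rest).sup
      have hcard : ((a - 1) ::ₘ 1 ::ₘ rest).card = P.parts.card + 1 := by
        rw [hrestcard]; simp
      have hsup : (a - 1) ⊔ rest.sup ≤ ((a - 1) ::ₘ 1 ::ₘ rest).sup := by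
        simp only [Multiset.sup_cons]
        exact sup_le le_sup_left (le_sup_of_le_right le_sup_right)
      rw [hcard]
      exact hmove1.trans hsup
    · show ((((a - 1) ::ₘ 1 ::ₘ rest)).map (fun x => x ^ 2)).sum < f P
      rw [hfP]
      simp only [Multiset.map_cons, Multiset.sum_cons, one_pow]
      have := sq_ineq1 a ha2
      omega
  · push_neg at hmove1
    have hcard_eq : P.parts.card = a - 1 := by
      have h2 : a - 1 ≤ (a - 1) ⊔ rest.sup := le_sup_left
      omega
    have hrsup : rest.sup ≤ a - 1 := by
      have h2 : rest.sup ≤ (a - 1) ⊔ rest.sup := le_sup_right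
      omega
    have ha3 : 3 ≤ a := by
      rcases Nat.lt_or_ge a 3 with h | h
      · exfalso
        have ha2' : a = 2 := by omega
        have hc0 : rest.card = 0 := by omega
        have : rest = 0 := Multiset.card_eq_zero.mp hc0
        rw [this] at hrestsum
        simp [ha2'] at hrestsum
        exact hn hrestsum.symm
      · exact h
    by_cases hmove2 : ∃ s ∈ rest, s ≤ a - 2
    · -- Move 2: a → a-1, s → s+1
      obtain ⟨s, hsmem, hs⟩ := hmove2
      obtain ⟨rest', hrest'⟩ := Multiset.exists_cons_of_mem hsmem
      have hspos : 0 < s := hrestpos s hsmem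
      have hpos : ∀ x ∈ (a - 1) ::ₘ (s + 1) ::ₘ rest', 0 < x := by
        intro x hx
        rcases Multiset.mem_cons.mp hx with rfl | hx
        · omega
        rcases Multiset.mem_cons.mp hx with rfl | hx
        · omega
        · exact hrestpos x (by rw [hrest']; exact Multiset.mem_cons_of_mem hx)
      have hsum' : rest.sum = s + rest'.sum := by rw [hrest']; simp
      have hsum : ((a - 1) ::ₘ (s + 1) ::ₘ rest').sum = n := by
        simp only [Multiset.sum_cons]
        omega
      have hrest'sup : rest'.sup ≤ a - 1 := by
        refine le_trans ?_ hrsup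
        rw [hrest', Multiset.sup_cons]
        exact le_sup_right
      refine contra ⟨(a - 1) ::ₘ (s + 1) ::ₘ rest', fun {x} hx => hpos x hx, hsum⟩ ?_ ?_
      · show ((a - 1) ::ₘ (s + 1) ::ₘ rest').card ≤ ((a - 1) ::ₘ (s + 1) ::ₘ rest').sup
        have hcard : ((a - 1) ::ₘ (s + 1) ::ₘ rest').card = a - 1 := by
          have h1 : rest.card = rest'.card + 1 := by rw [hrest']; simp
          simp only [Multiset.card_cons]
          omega
        have hsup : ((a - 1) ::ₘ (s + 1) ::ₘ rest').sup = a - 1 := by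
          simp only [Multiset.sup_cons]
          have h1 : s + 1 ≤ a - 1 := by omega
          exact le_antisymm (sup_le le_rfl (sup_le h1 hrest'sup)) le_sup_left
        rw [hcard, hsup]
      · show ((((a - 1) ::ₘ (s + 1) ::ₘ rest')).map (fun x => x ^ 2)).sum < f P
        have hfP' : f P = a ^ 2 + (s ^ 2 + (rest'.map (fun x => x ^ 2)).sum) := by
          rw [hfP, hrest']
          simp
        rw [hfP']
        simp only [Multiset.map_cons, Multiset.sum_cons]
        have := sq_ineq2 a s (by omega) ha2
        omega
    · -- all parts of rest equal a - 1; Move 3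
      push_neg at hmove2
      have hall : ∀ x ∈ rest, x = a - 1 := by
        intro x hx
        have h1 : a - 2 < x := hmove2 x hx
        have h2 : x ≤ a - 1 := le_trans (Multiset.le_sup hx) hrsup
        omega
      have hrep : rest = Multiset.replicate rest.card (a - 1) :=
        (Multiset.eq_replicate_card).mpr hall
      have hrcard : rest.card = a - 2 := by omega
      have hrsum : rest.sum = (a - 2) * (a - 1) := by
        rw [hrep, Multiset.sum_replicate, hrcard]
        simp
      have hneq : n = a + (a - 2) * (a - 1) := by omega
      have hpos : ∀ x ∈ a ::ₘ Multiset.replicate (a - 1) (a - 2), 0 < x := by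
        intro x hx
        rcases Multiset.mem_cons.mp hx with rfl | hx
        · omega
        · have := Multiset.eq_of_mem_replicate hx
          omega
      have hsum : (a ::ₘ Multiset.replicate (a - 1) (a - 2)).sum = n := by
        simp only [Multiset.sum_cons, Multiset.sum_replicate, smul_eq_mul]
        have h1 : (a - 1) * (a - 2) = (a - 2) * (a - 1) := Nat.mul_comm _ _
        omega
      refine contra ⟨a ::ₘ Multiset.replicate (a - 1) (a - 2), fun {x} hx => hpos x hx, hsum⟩ ?_ ?_
      · show (a ::ₘ Multiset.replicate (a - 1) (a - 2)).card ≤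
          (a ::ₘ Multiset.replicate (a - 1) (a - 2)).sup
        have hcard : (a ::ₘ Multiset.replicate (a - 1) (a - 2)).card = a := by
          simp only [Multiset.card_cons, Multiset.card_replicate]
          omega
        have hsup : a ≤ (a ::ₘ Multiset.replicate (a - 1) (a - 2)).sup := by
          simp only [Multiset.sup_cons]
          exact le_sup_left
        rw [hcard]
        exact hsup
      · show (((a ::ₘ Multiset.replicate (a - 1) (a - 2))).map (fun x => x ^ 2)).sum < f P
        have hfP' : f P = a ^ 2 + (a - 2) * (a - 1) ^ 2 := by
          rw [hfP, hrep, hrcard]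
          simp [Multiset.sum_replicate]
        rw [hfP']
        simp only [Multiset.map_cons, Multiset.sum_cons, Multiset.map_replicate,
          Multiset.sum_replicate, smul_eq_mul]
        have := sq_ineq3 a ha3
        omega
end

section
/- Let m ≥ 0 and q ≥ 1 be integers, and write m = bq + s with b ≥ 0 and 0 ≤ s < q. Then m²/q ≤ s(b+1)² + (q−s)b² ≤ m²/q + q/4. -/
/-- If `m = b*q + s` with `0 ≤ s < q`, then
`m²/q ≤ s(b+1)² + (q−s)b² ≤ m²/q + q/4` over ℚ. -/
theorem stmt_6 (m q b s : ℤ) (hm : 0 ≤ m) (hq : 1 ≤ q) (hb : 0 ≤ b)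
    (hs : 0 ≤ s) (hsq : s < q) (hdiv : m = b * q + s) :
    (m : ℚ) ^ 2 / q ≤ (s : ℚ) * (b + 1) ^ 2 + (q - s) * b ^ 2 ∧
      (s : ℚ) * (b + 1) ^ 2 + (q - s) * b ^ 2 ≤ (m : ℚ) ^ 2 / q + q / 4 := by
  have hq' : (0:ℚ) < q := by exact_mod_cast hq
  have hs' : (0:ℚ) ≤ s := by exact_mod_cast hs
  have hsq' : (s:ℚ) < q := by exact_mod_cast hsq
  subst hdiv
  push_cast
  constructor
  · rw [div_le_iff₀ hq']
    nlinarith [mul_nonneg hs' (sub_nonneg.2 hsq'.le)]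
  · rw [div_add_div _ _ hq'.ne' (by norm_num : (4:ℚ) ≠ 0), le_div_iff₀ (by positivity)]
    nlinarith [sq_nonneg ((q:ℚ) - 2*s)]
end

section
/- For integers 2 ≤ x ≤ n, write n − x = a(x−1) + r with a ≥ 0 and 0 ≤ r < x − 1. Then x² + (n−x)²/(x−1) ≤ x² + r(a+1)² + (x−1−r)a² ≤ x² + (n−x)²/(x−1) + (x−1)/4. -/
/-- For `2 ≤ x ≤ n` with `n − x = a(x−1) + r`, `0 ≤ a`, `0 ≤ r < x − 1`,
`x² + (n−x)²/(x−1) ≤ x² + r(a+1)² + (x−1−r)a² ≤ x² + (n−x)²/(x−1) + (x−1)/4`. -/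
theorem stmt_8 (x n a r : ℤ) (hx : 2 ≤ x) (hxn : x ≤ n) (ha : 0 ≤ a)
    (hr : 0 ≤ r) (hrx : r < x - 1) (hdiv : n - x = a * (x - 1) + r) :
    (x : ℝ) ^ 2 + ((n : ℝ) - x) ^ 2 / ((x : ℝ) - 1) ≤
        (x : ℝ) ^ 2 + (r : ℝ) * ((a : ℝ) + 1) ^ 2 + ((x : ℝ) - 1 - r) * (a : ℝ) ^ 2 ∧
      (x : ℝ) ^ 2 + (r : ℝ) * ((a : ℝ) + 1) ^ 2 + ((x : ℝ) - 1 - r) * (a : ℝ) ^ 2 ≤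
        (x : ℝ) ^ 2 + ((n : ℝ) - x) ^ 2 / ((x : ℝ) - 1) + ((x : ℝ) - 1) / 4 := by
  have hm : (0:ℝ) < (x:ℝ) - 1 := by
    have : (2:ℝ) ≤ (x:ℝ) := by exact_mod_cast hx
    linarith
  have hn : (n:ℝ) - x = (a:ℝ) * ((x:ℝ) - 1) + r := by exact_mod_cast hdiv
  have hr' : (0:ℝ) ≤ (r:ℝ) := by exact_mod_cast hr
  have hrx' : (r:ℝ) < (x:ℝ) - 1 := by
    have : (r:ℝ) < (x:ℝ) - 1 := by exact_mod_cast hrx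
    exact this
  have key : ((n:ℝ) - x) ^ 2 / ((x:ℝ) - 1) =
      (a:ℝ)^2 * ((x:ℝ)-1) + 2*(a:ℝ)*r + (r:ℝ)^2 / ((x:ℝ)-1) := by
    rw [hn]
    field_simp
    ring
  constructor
  · rw [key]
    have h1 : (r:ℝ)^2 / ((x:ℝ)-1) ≤ r := by
      rw [div_le_iff₀ hm]
      nlinarith
    nlinarith
  · rw [key]
    have h2 : (r:ℝ) - ((x:ℝ)-1)/4 ≤ (r:ℝ)^2 / ((x:ℝ)-1) := by
      rw [le_div_iff₀ hm]
      nlinarith [sq_nonneg ((x:ℝ) - 1 - 2*r)]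
    nlinarith
end

section
/- Define m_n to be the minimum of Σᵢ λᵢ² over all partitions λ of n with nonnegative rank (largest part at least the number of parts). Then the sequence (m_n) is strictly increasing: m_n < m_{n+1} for all n ≥ 1. -/
/-! An optimal partition of `n + 1` loses one box from its smallest part `m`: this lowers the
sum of squares by `2m - 1` and keeps the rank nonnegative, giving a cheaper partition of `n`. -/

/-- The minimal sum of squares of parts over partitions of n with nonnegative rank. -/
noncomputable def minSumSq (n : ℕ) : ℕ :=
  sInf {s | ∃ P : n.Partition, P.parts.card ≤ P.parts.sup ∧
    (P.parts.map (fun x => x ^ 2)).sum = s}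

namespace Multiset

theorem card_erase_one_le_sup {s : Multiset ℕ} (h1 : 1 ∈ s) (hs : card s ≤ s.sup) :
    card (s.erase 1) ≤ (s.erase 1).sup := by
  rw [← cons_erase h1, card_cons, sup_cons] at hs
  change card (s.erase 1) + 1 ≤ max 1 (s.erase 1).sup at hs
  omega

theorem card_le_sup_cons_pred_erase_of_forall_le {s : Multiset ℕ} {m : ℕ} (hm : m ∈ s)
    (hmin : ∀ b ∈ s, m ≤ b) (hm2 : 2 ≤ m) (hs : card s ≤ s.sup) :
    card ((m - 1) ::ₘ s.erase m) ≤ ((m - 1) ::ₘ s.erase m).sup := by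
  rw [← cons_erase hm, card_cons, sup_cons] at hs
  rw [card_cons, sup_cons]
  change card (s.erase m) + 1 ≤ max (m - 1) (s.erase m).sup
  change card (s.erase m) + 1 ≤ max m (s.erase m).sup at hs
  obtain hE | ⟨b, hb⟩ := (s.erase m).empty_or_exists_mem
  · simp only [hE, card_zero]
    omega
  · have : m ≤ (s.erase m).sup := (hmin b (mem_of_mem_erase hb)).trans (le_sup hb)
    omega

end Multiset

theorem minSumSq_le {n : ℕ} (Q : n.Partition) (hQ : Q.parts.card ≤ Q.parts.sup) :
    minSumSq n ≤ (Q.parts.map (fun x => x ^ 2)).sum :=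
  Nat.sInf_le ⟨Q, hQ, rfl⟩

theorem exists_partition_sum_sq_eq_minSumSq (n : ℕ) :
    ∃ P : n.Partition, P.parts.card ≤ P.parts.sup ∧
      (P.parts.map (fun x => x ^ 2)).sum = minSumSq n := by
  refine Nat.sInf_mem (s := {s | ∃ P : n.Partition, P.parts.card ≤ P.parts.sup ∧
    (P.parts.map (fun x => x ^ 2)).sum = s}) ⟨_, Nat.Partition.indiscrete n, ?_, rfl⟩
  rcases eq_or_ne n 0 with rfl | hn
  · simp [Nat.Partition.partition_zero_parts]
  · simpa [hn] using Nat.one_le_iff_ne_zero.2 hn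

theorem exists_partition_sum_sq_lt {n : ℕ} (P : (n + 1).Partition)
    (hP : P.parts.card ≤ P.parts.sup) :
    ∃ Q : n.Partition, Q.parts.card ≤ Q.parts.sup ∧
      (Q.parts.map (fun x => x ^ 2)).sum < (P.parts.map (fun x => x ^ 2)).sum := by
  have hne : P.parts ≠ 0 := fun h => by simpa [h] using P.parts_sum
  obtain ⟨m, hm, hmin⟩ := Multiset.exists_min_image id hne
  have hsum := P.parts_sum
  rw [← Multiset.cons_erase hm, Multiset.sum_cons] at hsum
  have hsq := congrArg (fun s => (s.map (fun x => x ^ 2)).sum) (Multiset.cons_erase hm)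
  simp only [Multiset.map_cons, Multiset.sum_cons] at hsq
  have hm1 : 1 ≤ m := P.parts_pos hm
  rcases hm1.eq_or_lt with rfl | hm2
  · refine ⟨⟨P.parts.erase 1, fun hi => P.parts_pos (Multiset.mem_of_mem_erase hi), by omega⟩,
      Multiset.card_erase_one_le_sup hm hP, by dsimp only; omega⟩
  · refine ⟨⟨(m - 1) ::ₘ P.parts.erase m, fun hi => ?_, by rw [Multiset.sum_cons]; omega⟩,
      Multiset.card_le_sup_cons_pred_erase_of_forall_le hm hmin hm2 hP, ?_⟩
    · rcases Multiset.mem_cons.1 hi with rfl | hi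
      · omega
      · exact P.parts_pos (Multiset.mem_of_mem_erase hi)
    · have : (m - 1) ^ 2 < m ^ 2 := Nat.pow_lt_pow_left (by omega) (by omega)
      simp only [Multiset.map_cons, Multiset.sum_cons]
      omega

theorem stmt_10_general (n : ℕ) : minSumSq n < minSumSq (n + 1) := by
  obtain ⟨P, hP, hPsq⟩ := exists_partition_sum_sq_eq_minSumSq (n + 1)
  obtain ⟨Q, hQ, hlt⟩ := exists_partition_sum_sq_lt P hP
  calc minSumSq n ≤ (Q.parts.map (fun x => x ^ 2)).sum := minSumSq_le Q hQ
    _ < minSumSq (n + 1) := hPsq ▸ hlt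

/-- The sequence of minima is strictly increasing. -/
theorem stmt_10 (n : ℕ) (hn : 1 ≤ n) : minSumSq n < minSumSq (n + 1) :=
  stmt_10_general n
end

section
/- Define m_n as the minimum of Σᵢ λᵢ² over partitions λ of n with nonnegative rank. Then for all n ≥ 28, m_n ≤ (2^{−2/3} + 2^{1/3}) n^{4/3}. -/
open Multiset

def balancedParts (m k : ℕ) : Multiset ℕ :=
  replicate (m % k) (m / k + 1) + replicate (k - m % k) (m / k)

section balancedParts

variable {m k : ℕ}

theorem card_balancedParts (hk : 0 < k) : card (balancedParts m k) = k := by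
  simp [balancedParts, (Nat.mod_lt m hk).le]

theorem sum_balancedParts (hk : 0 < k) : (balancedParts m k).sum = m := by
  have hr := (Nat.mod_lt m hk).le
  simp only [balancedParts, sum_add, sum_replicate, smul_eq_mul]
  conv_rhs => rw [← Nat.div_add_mod m k]
  zify [hr]
  ring

theorem pos_of_mem_balancedParts (hk : 0 < k) (hkm : k ≤ m) {x : ℕ}
    (hx : x ∈ balancedParts m k) : 0 < x := by
  have : 0 < m / k := Nat.div_pos hkm hk
  simp only [balancedParts, mem_add, mem_replicate] at hx
  omega

theorem mul_sum_sq_balancedParts (hk : 0 < k) :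
    k * ((balancedParts m k).map (· ^ 2)).sum = m ^ 2 + m % k * (k - m % k) := by
  have hr := (Nat.mod_lt m hk).le
  have hm := Nat.div_add_mod m k
  simp only [balancedParts, map_add, map_replicate, sum_add, sum_replicate, smul_eq_mul]
  generalize m / k = q at *
  generalize m % k = r at *
  subst hm
  zify [hr]
  ring

theorem four_mul_sum_sq_balancedParts_le (hk : 0 < k) :
    4 * k * ((balancedParts m k).map (· ^ 2)).sum ≤ 4 * m ^ 2 + k ^ 2 := by
  have hr := (Nat.mod_lt m hk).le
  have hamgm : 4 * (m % k * (k - m % k)) ≤ k ^ 2 := by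
    generalize m % k = r at *
    zify [hr]
    nlinarith [sq_nonneg (2 * (r : ℤ) - k)]
  rw [mul_assoc, mul_sum_sq_balancedParts hk]
  omega

end balancedParts

def balancedPartition (n k : ℕ) (hk : 0 < k) (hkn : 2 * k + 1 ≤ n) : n.Partition where
  parts := (k + 1) ::ₘ balancedParts (n - (k + 1)) k
  parts_pos {x} hx := by
    rcases mem_cons.mp hx with rfl | hx
    · exact k.succ_pos
    · exact pos_of_mem_balancedParts hk (by omega) hx
  parts_sum := by rw [sum_cons, sum_balancedParts hk]; omega

theorem card_le_sup_balancedPartition {n k : ℕ} (hk : 0 < k) (hkn : 2 * k + 1 ≤ n) :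
    card (balancedPartition n k hk hkn).parts ≤ (balancedPartition n k hk hkn).parts.sup := by
  have hcard : card (balancedPartition n k hk hkn).parts = k + 1 := by
    simp [balancedPartition, card_balancedParts hk]
  exact hcard ▸ le_sup (mem_cons_self (k + 1) (balancedParts (n - (k + 1)) k))

theorem four_mul_minSumSq_le {n k : ℕ} (hk : 0 < k) (hkn : 2 * k + 1 ≤ n) :
    4 * k * minSumSq n ≤ 4 * k * (k + 1) ^ 2 + 4 * (n - (k + 1)) ^ 2 + k ^ 2 := by
  have hmin : minSumSq n ≤ (k + 1) ^ 2 + ((balancedParts (n - (k + 1)) k).map (· ^ 2)).sum :=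
    Nat.sInf_le ⟨balancedPartition n k hk hkn, card_le_sup_balancedPartition hk hkn,
      by simp [balancedPartition]⟩
  calc 4 * k * minSumSq n
      ≤ 4 * k * ((k + 1) ^ 2 + ((balancedParts (n - (k + 1)) k).map (· ^ 2)).sum) := by gcongr
    _ ≤ _ := by rw [mul_add]; linarith [four_mul_sum_sq_balancedParts_le (m := n - (k + 1)) hk]

theorem three_mul_le_of_sq_eq_two_mul_cube {N c : ℝ} (hN : 27 / 2 ≤ N)
    (hc : N ^ 2 = 2 * c ^ 3) : 3 * c ≤ N := by
  by_contra! h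
  nlinarith [pow_lt_pow_left₀ h (by linarith) three_ne_zero]

theorem four_mul_sq_add_le_of_sq_eq_two_mul_cube {N c k : ℝ} (hN : 28 ≤ N)
    (hc : N ^ 2 = 2 * c ^ 3) (hck : c ≤ k) (hkc : k ≤ c + 1) :
    4 * k * (k + 1) ^ 2 + 4 * (N - (k + 1)) ^ 2 + k ^ 2 ≤ 12 * c ^ 2 * k := by
  have hc0 : 0 < c := (Odd.pow_pos_iff (n := 3) (by decide)).mp (by nlinarith)
  have h3c := three_mul_le_of_sq_eq_two_mul_cube (by linarith) hc
  -- `k ^ 3 + 2 c ^ 3 - 3 c ^ 2 k = (k - c) ^ 2 (k + 2 c)` and `(k - c) ^ 2 ≤ 1`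
  have hcube : 2 * c ^ 3 + k ^ 3 ≤ 3 * c ^ 2 * k + 3 * k := by
    nlinarith [mul_le_mul_of_nonneg_right (show (k - c) ^ 2 ≤ 1 by nlinarith)
      (show 0 ≤ k + 2 * c by linarith)]
  nlinarith [mul_nonneg (by linarith : 0 ≤ N / 3 + 1 - k) (by linarith : 0 ≤ k),
    mul_nonneg (by linarith : 0 ≤ N - 28) (by linarith : 0 ≤ k)]

theorem two_mul_rpow_cube_eq_sq {N : ℝ} (hN : 0 ≤ N) :
    2 * ((2 : ℝ) ^ (-(1 : ℝ) / 3) * N ^ ((2 : ℝ) / 3)) ^ 3 = N ^ 2 := by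
  rw [mul_pow, ← Real.rpow_natCast, ← Real.rpow_natCast (N ^ _), ← Real.rpow_mul zero_le_two,
    ← Real.rpow_mul hN]
  norm_num
  ring

theorem three_mul_rpow_sq_eq {N : ℝ} (hN : 0 ≤ N) :
    3 * ((2 : ℝ) ^ (-(1 : ℝ) / 3) * N ^ ((2 : ℝ) / 3)) ^ 2 =
      ((2 : ℝ) ^ (-(2 : ℝ) / 3) + (2 : ℝ) ^ ((1 : ℝ) / 3)) * N ^ ((4 : ℝ) / 3) := by
  have h : (2 : ℝ) ^ ((1 : ℝ) / 3) = 2 * 2 ^ (-(2 : ℝ) / 3) := by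
    rw [← Real.rpow_one_add' zero_le_two (by norm_num)]; norm_num
  rw [h, mul_pow, ← Real.rpow_natCast, ← Real.rpow_natCast (N ^ _), ← Real.rpow_mul zero_le_two,
    ← Real.rpow_mul hN]
  norm_num
  ring

/-- For `n ≥ 28`, `minSumSq n ≤ (2^(−2/3) + 2^(1/3)) n^(4/3)`. -/
theorem stmt_14 (n : ℕ) (hn : 28 ≤ n) :
    (minSumSq n : ℝ) ≤
      ((2 : ℝ) ^ (-(2 : ℝ) / 3) + (2 : ℝ) ^ ((1 : ℝ) / 3)) * (n : ℝ) ^ ((4 : ℝ) / 3) := by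
  set c : ℝ := 2 ^ (-(1 : ℝ) / 3) * (n : ℝ) ^ ((2 : ℝ) / 3)
  have hN : (28 : ℝ) ≤ n := by exact_mod_cast hn
  have hc0 : 0 < c := by positivity
  have hc : (n : ℝ) ^ 2 = 2 * c ^ 3 := (two_mul_rpow_cube_eq_sq n.cast_nonneg).symm
  set k := ⌈c⌉₊
  have hck : c ≤ k := Nat.le_ceil c
  have hkc : (k : ℝ) ≤ c + 1 := (Nat.ceil_lt_add_one hc0.le).le
  have hk : 0 < k := Nat.ceil_pos.mpr hc0
  have hkn : 2 * k + 1 ≤ n := by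
    have := three_mul_le_of_sq_eq_two_mul_cube (by linarith) hc
    exact_mod_cast (show ((2 * k + 1 : ℕ) : ℝ) ≤ n by push_cast; linarith)
  have hmin : 4 * k * (minSumSq n : ℝ) ≤
      4 * k * (k + 1) ^ 2 + 4 * (n - (k + 1) : ℝ) ^ 2 + k ^ 2 := by
    have h := four_mul_minSumSq_le hk hkn
    rw [← Nat.cast_le (α := ℝ)] at h
    push_cast [Nat.cast_sub (show k + 1 ≤ n by omega)] at h
    exact h
  have hbound := four_mul_sq_add_le_of_sq_eq_two_mul_cube hN hc hck hkc
  calc (minSumSq n : ℝ) ≤ 3 * c ^ 2 :=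
        le_of_mul_le_mul_left (by linarith) (by positivity : (0 : ℝ) < 4 * k)
    _ = _ := three_mul_rpow_sq_eq n.cast_nonneg
end

section
/- For every real x > 1 and every integer n ≥ 3, x² + (n − x)²/(x − 1) ≥ (1/4)·((2n² − 4n + 1) + √((2n² − 4n + 1)² − 1))^{2/3}, i.e., the function l_n(x) = x² + (n−x)²/(x−1) on (1,∞) is bounded below by 1/(4 D_n²) where D_n = ((2n²−4n+1) − √((2n²−4n+1)²−1))^{1/3}. -/
/-!
Put `t = x - 1` and `m = n - 1`, so that the right-hand side is `f = (1 + t)² + (m - t)² / t`.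
Since `√(a² - 1) ≤ a` for `a = 2n² - 4n + 1 = 2m² - 1`, the base of the power on the left is at
most `2a ≤ 4m²`, and it suffices to show `m⁴ ≤ 4 f³`. For `t ≥ m / 2` this follows from
`f ≥ (1 + m / 2)²`; for `t ≤ m / 2` from AM-GM applied to `f ≥ t² + s² / (2t) + s² / (2t)` with
`s = m - t ≥ m / 2`.
-/

open Real

lemma twenty_seven_mul_mul_sq_le_add_two_mul_pow_three {u v : ℝ} (hu : 0 ≤ u) (hv : 0 ≤ v) :
    27 * (u * v ^ 2) ≤ (u + 2 * v) ^ 3 := by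
  -- `(u + 2v)³ - 27uv² = (u - v)² (u + 8v)`
  nlinarith [mul_nonneg (sq_nonneg (u - v)) (by positivity : 0 ≤ u + 8 * v)]

lemma rpow_two_div_three_le_of_sq_le_pow_three {A B : ℝ} (hA : 0 ≤ A) (hB : 0 ≤ B)
    (h : A ^ 2 ≤ B ^ 3) : A ^ ((2 : ℝ) / 3) ≤ B := by
  have hcube : (A ^ ((2 : ℝ) / 3)) ^ 3 = A ^ 2 := by
    rw [← rpow_natCast, ← rpow_mul hA, ← rpow_natCast]
    norm_num
  rw [← pow_le_pow_iff_left₀ (by positivity) hB three_ne_zero, hcube]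
  exact h

section FourthPowerBound

variable {m t : ℝ}

lemma pow_four_le_of_le_half (hm : 0 ≤ m) (ht : 0 < t) (htm : t ≤ m / 2) :
    m ^ 4 ≤ 4 * ((1 + t) ^ 2 + (m - t) ^ 2 / t) ^ 3 := by
  set s := m - t
  have hs : m / 2 ≤ s := by linarith
  have hamgm : 27 * (s ^ 4 / 4) ≤ (t ^ 2 + s ^ 2 / t) ^ 3 := by
    have h := twenty_seven_mul_mul_sq_le_add_two_mul_pow_three (sq_nonneg t)
      (by positivity : 0 ≤ s ^ 2 / (2 * t))
    convert h using 2
    · field_simp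
      ring
    · field_simp
  have hs4 : (m / 2) ^ 4 ≤ s ^ 4 := pow_le_pow_left₀ (by positivity) hs 4
  have hf : t ^ 2 + s ^ 2 / t ≤ (1 + t) ^ 2 + s ^ 2 / t := by nlinarith
  have hf3 := pow_le_pow_left₀ (by positivity) hf 3
  nlinarith

lemma pow_four_le_of_half_le (hm : 0 ≤ m) (htm : m / 2 ≤ t) :
    m ^ 4 ≤ 4 * ((1 + t) ^ 2 + (m - t) ^ 2 / t) ^ 3 := by
  set u := m / 2
  have hu : 0 ≤ u := by positivity
  have hbinom : 3 * u ^ 2 ≤ (1 + u) ^ 3 := by nlinarith [pow_nonneg hu 3]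
  have hbinom2 := pow_le_pow_left₀ (by positivity) hbinom 2
  have hf : (1 + u) ^ 2 ≤ (1 + t) ^ 2 + (m - t) ^ 2 / t := by
    have : 0 ≤ (m - t) ^ 2 / t := div_nonneg (sq_nonneg _) (hu.trans htm)
    nlinarith
  have hf3 := pow_le_pow_left₀ (by positivity) hf 3
  have hm4 : m ^ 4 = 16 * u ^ 4 := by simp only [u]; ring
  nlinarith

lemma pow_four_le_four_mul_pow_three (hm : 0 ≤ m) (ht : 0 < t) :
    m ^ 4 ≤ 4 * ((1 + t) ^ 2 + (m - t) ^ 2 / t) ^ 3 := by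
  rcases le_total t (m / 2) with htm | htm
  · exact pow_four_le_of_le_half hm ht htm
  · exact pow_four_le_of_half_le hm htm

end FourthPowerBound

lemma add_sqrt_sq_sub_one_le_two_mul {a : ℝ} (ha : 0 ≤ a) : a + √(a ^ 2 - 1) ≤ 2 * a := by
  have : √(a ^ 2 - 1) ≤ a := (sqrt_le_left ha).2 (by linarith)
  linarith

/-- For integer `n ≥ 3` and real `x > 1`,
`x² + (n − x)²/(x − 1) ≥ (1/4) ((2n² − 4n + 1) + √((2n² − 4n + 1)² − 1))^(2/3)`. -/
theorem stmt_15 (n : ℕ) (hn : 3 ≤ n) (x : ℝ) (hx : 1 < x) :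
    (1 / 4) * ((2 * (n : ℝ) ^ 2 - 4 * n + 1) +
        Real.sqrt ((2 * (n : ℝ) ^ 2 - 4 * n + 1) ^ 2 - 1)) ^ ((2 : ℝ) / 3) ≤
      x ^ 2 + ((n : ℝ) - x) ^ 2 / (x - 1) := by
  set a : ℝ := 2 * (n : ℝ) ^ 2 - 4 * n + 1
  set f : ℝ := x ^ 2 + ((n : ℝ) - x) ^ 2 / (x - 1)
  have hn3 : (3 : ℝ) ≤ n := by exact_mod_cast hn
  have ha : 0 ≤ a := by nlinarith
  have hM : a + √(a ^ 2 - 1) ≤ 4 * ((n : ℝ) - 1) ^ 2 := by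
    linarith [add_sqrt_sq_sub_one_le_two_mul ha]
  have hkey : ((n : ℝ) - 1) ^ 4 ≤ 4 * f ^ 3 := by
    have h := pow_four_le_four_mul_pow_three (m := (n : ℝ) - 1) (t := x - 1) (by linarith)
      (by linarith)
    rwa [add_sub_cancel, sub_sub_sub_cancel_right] at h
  have hf : 0 ≤ f := by
    have : 0 < x - 1 := by linarith
    positivity
  have hbound : (a + √(a ^ 2 - 1)) ^ ((2 : ℝ) / 3) ≤ 4 * f := by
    refine rpow_two_div_three_le_of_sq_le_pow_three (by positivity) (by positivity) ?_
    have := pow_le_pow_left₀ (by positivity) hM 2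
    nlinarith
  linarith
end

section
/- Both partitions (5,3,3,3,3) and (6,3,2,2,2,2) of 17 have nonnegative rank and attain the minimal sum of squares (equal to 61) among all partitions of 17 with nonnegative rank. In particular, the minimizer of the sum of squares over partitions of n with nonnegative rank need not be unique. -/
private lemma aux_two_mul (a : ℕ) (s : Multiset ℕ) :
    2 * a * s.sum ≤ s.card * a ^ 2 + (s.map (fun x => x ^ 2)).sum := by
  induction s using Multiset.induction with
  | empty => simp
  | cons b t ih =>
    simp only [Multiset.sum_cons, Multiset.card_cons, Multiset.map_cons]
    nlinarith [sq_nonneg ((a : ℤ) - b)]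

private lemma aux_cauchy (s : Multiset ℕ) :
    s.sum ^ 2 ≤ s.card * (s.map (fun x => x ^ 2)).sum := by
  induction s using Multiset.induction with
  | empty => simp
  | cons a t ih =>
    simp only [Multiset.sum_cons, Multiset.card_cons, Multiset.map_cons]
    have h2 := aux_two_mul a t
    nlinarith

private lemma aux_sum_le_sq_sum (s : Multiset ℕ) :
    s.sum ≤ (s.map (fun x => x ^ 2)).sum := by
  induction s using Multiset.induction with
  | empty => simp
  | cons a t ih =>
    simp only [Multiset.sum_cons, Multiset.map_cons]
    have : a ≤ a ^ 2 := by nlinarith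
    omega

private lemma aux_sup_mem (s : Multiset ℕ) (h : s ≠ 0) : s.sup ∈ s := by
  induction s using Multiset.induction with
  | empty => exact absurd rfl h
  | cons a t ih =>
    rcases eq_or_ne t 0 with rfl | ht
    · simp
    · rw [Multiset.sup_cons]
      rcases le_total a t.sup with hle | hle
      · rw [sup_eq_right.2 hle]
        exact Multiset.mem_cons_of_mem (ih ht)
      · rw [sup_eq_left.2 hle]
        exact Multiset.mem_cons_self a t

/-- Both `(5,3,3,3,3)` and `(6,3,2,2,2,2)` are partitions of `17` with nonnegative rank
attaining the minimal sum of squares `61` among all partitions of `17` with nonnegative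
rank; in particular the minimizer is not unique. -/
theorem stmt_18 :
    ∃ P Q : Nat.Partition 17,
      P.parts = {5, 3, 3, 3, 3} ∧ Q.parts = {6, 3, 2, 2, 2, 2} ∧
      P.parts.card ≤ P.parts.sup ∧ Q.parts.card ≤ Q.parts.sup ∧
      (P.parts.map (fun x => x ^ 2)).sum = 61 ∧
      (Q.parts.map (fun x => x ^ 2)).sum = 61 ∧
      ∀ R : Nat.Partition 17, R.parts.card ≤ R.parts.sup →
        61 ≤ (R.parts.map (fun x => x ^ 2)).sum := by
  refine ⟨⟨{5,3,3,3,3}, by decide, by decide⟩, ⟨{6,3,2,2,2,2}, by decide, by decide⟩,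
    rfl, rfl, by decide, by decide, by decide, by decide, ?_⟩
  intro R hR
  set s := R.parts with hs
  have hsum : s.sum = 17 := R.parts_sum
  set k := s.card with hk
  set m := s.sup with hm
  set Q := (s.map (fun x => x ^ 2)).sum with hQ
  have hC := aux_cauchy s
  rw [hsum] at hC
  rcases le_or_gt k 4 with hk4 | hk5
  · have h4 : 17 ^ 2 ≤ 4 * Q := le_trans hC (Nat.mul_le_mul_right _ hk4)
    omega
  · -- k ≥ 5, so m ≥ 5 and s ≠ 0
    have hm5 : 5 ≤ m := le_trans hk5 hR
    have hne : s ≠ 0 := by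
      intro h0
      rw [h0] at hsum; simp at hsum
    obtain ⟨t, ht⟩ := Multiset.exists_cons_of_mem (aux_sup_mem s hne)
    have htsum : m + t.sum = 17 := by rw [← hsum, ht, Multiset.sum_cons]
    have htcard : k = t.card + 1 := by rw [hk, ht, Multiset.card_cons]
    have hQt : Q = m ^ 2 + (t.map (fun x => x ^ 2)).sum := by
      rw [hQ, ht, Multiset.map_cons, Multiset.sum_cons]
    set Qt := (t.map (fun x => x ^ 2)).sum with hQt'
    rcases le_or_gt 8 m with h8 | h7
    · have := aux_sum_le_sq_sum t
      have hm17 : m ≤ 17 := by omega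
      nlinarith
    · -- 5 ≤ m ≤ 7
      have hCt := aux_cauchy t
      have htc : t.card ≤ m - 1 := by omega
      have : t.card * Qt ≤ (m - 1) * Qt := Nat.mul_le_mul_right _ htc
      have hCt' : t.sum ^ 2 ≤ (m - 1) * Qt := le_trans hCt this
      interval_cases m <;> nlinarith
end
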